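/- arXiv:2203.15910 — 2 statements merged into one kernel-verified Lean document; each statement's English description precedes it below -/
import Mathlib

section
/- For every m ≥ 1, the quadratic form H₋ ⊕ H₊^{⊕(m−1)} on 𝔽₂^{2m} is admissible. -/
/-- The polar form `B_Q(u,v) = Q(u+v) − Q(u) − Q(v)` of a map `Q : V → 𝔽₂`. -/
def polarF {V : Type*} [Add V] (Q : V → ZMod 2) (u v : V) : ZMod 2 :=
  Q (u + v) - Q u - Q v

/-- A form `Q` on an `𝔽₂`-vector space is admissible if there is a basis `v₁,…,v_ℓ` with
`Q(vᵢ) = 1` for all `i`, and for every `i` there is `j` with `B_Q(vᵢ,vⱼ) = 1`. -/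
def IsAdmissible {V : Type*} [AddCommGroup V] [Module (ZMod 2) V] (Q : V → ZMod 2) : Prop :=
  ∃ (ℓ : ℕ) (b : Module.Basis (Fin ℓ) (ZMod 2) V),
    (∀ i, Q (b i) = 1) ∧ (∀ i, ∃ j, polarF Q (b i) (b j) = 1)

/-- `H₊(x,y) = xy`. -/
def Hplus : ZMod 2 × ZMod 2 → ZMod 2 := fun p => p.1 * p.2

/-- `H₋(x,y) = x² + y² + xy`. -/
def Hminus : ZMod 2 × ZMod 2 → ZMod 2 := fun p => p.1 ^ 2 + p.2 ^ 2 + p.1 * p.2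

/-- `Q₁(x) = x²`. -/
def Qone : ZMod 2 → ZMod 2 := fun x => x ^ 2

/-!
Let `e₁, e₂` be the standard basis of `H₋` and `f_j, g_j` that of the `j`-th copy of `H₊`.
The vectors `e₁, e₂, e₁ + f_j, e₁ + g_j` form a basis (the image of the standard one under a
shear), `Q` takes the value `1` on each of them, `B_Q(e₁, e₂) = 1`, and
`B_Q(e₁ + f_j, e₁ + g_j) = B_Q(e₁, e₁) + B_Q(f_j, g_j) = 0 + 1` because `B_Q(v, v) = Q(0) = 0`
in characteristic `2`.
-/

open Module

section Polar

theorem polarF_self {V : Type*} [AddCommGroup V] [Module (ZMod 2) V] (Q : V → ZMod 2) (v : V) :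
    polarF Q v v = Q 0 := by
  have h2 : (2 : ZMod 2) = 0 := rfl
  rw [polarF, ← two_smul (ZMod 2) v, h2, zero_smul, sub_sub, ← two_mul, h2, zero_mul, sub_zero]

theorem polarF_prod {V W : Type*} [Add V] [Add W] (QV : V → ZMod 2) (QW : W → ZMod 2)
    (x y : V × W) :
    polarF (fun p : V × W => QV p.1 + QW p.2) x y = polarF QV x.1 y.1 + polarF QW x.2 y.2 := by
  simp only [polarF, Prod.fst_add, Prod.snd_add]
  ring

variable {ι M : Type*} [Fintype ι] [DecidableEq ι] [AddCommMonoid M] {q : M → ZMod 2}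

theorem sum_apply_single (hq : q 0 = 0) (j : ι) (a : M) :
    ∑ i, q ((Pi.single j a : ι → M) i) = q a := by
  rw [Fintype.sum_eq_single j fun i hi => by rw [Pi.single_eq_of_ne hi, hq], Pi.single_eq_same]

theorem polarF_sum_single (hq : q 0 = 0) (j : ι) (a a' : M) :
    polarF (fun p : ι → M => ∑ i, q (p i)) (Pi.single j a) (Pi.single j a') = polarF q a a' := by
  simp only [polarF, ← Pi.single_add, sum_apply_single hq]

end Polar

section Shear

variable {R V W ι : Type*} [CommRing R] [AddCommGroup V] [Module R V] [AddCommGroup W] [Module R W]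

/-- Sends the basis vector `(0, c i)` to `(e, c i)`. -/
noncomputable def shear (c : Basis ι R W) (e : V) : (V × W) ≃ₗ[R] V × W :=
  (LinearEquiv.prodComm R V W).trans
    (((LinearEquiv.refl R W).skewProd (LinearEquiv.refl R V) (c.sumCoords.smulRight e)).trans
      (LinearEquiv.prodComm R W V))

theorem shear_apply (c : Basis ι R W) (e : V) (x : V × W) :
    shear c e x = (x.1 + c.sumCoords x.2 • e, x.2) := by
  simp [shear]

end Shear

section Admissible

variable {V W : Type*} [AddCommGroup V] [Module (ZMod 2) V] [AddCommGroup W] [Module (ZMod 2) W]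

theorem isAdmissible_of_basis {Q : V → ZMod 2} {ι : Type*} [Fintype ι]
    (b : Basis ι (ZMod 2) V) (hQ : ∀ i, Q (b i) = 1)
    (hB : ∀ i, ∃ j, polarF Q (b i) (b j) = 1) : IsAdmissible Q := by
  let e := Fintype.equivFin ι
  refine ⟨_, b.reindex e, fun i => by simpa using hQ (e.symm i), fun i => ?_⟩
  obtain ⟨j, hj⟩ := hB (e.symm i)
  exact ⟨e j, by simpa using hj⟩

/-- The admissible basis is that of `QV` together with the vectors `(e, c i)`: these have value
`QV e + QW (c i) = 1` and pair like the `c i`, since `B_{QV}(e, e) = QV 0 = 0`. -/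
theorem IsAdmissible.prod {QV : V → ZMod 2} {QW : W → ZMod 2} (hV : IsAdmissible QV)
    (hQV : QV 0 = 0) (hQW : QW 0 = 0) {e : V} (he : QV e = 1) {ι : Type*} [Fintype ι]
    (c : Basis ι (ZMod 2) W) (hc : ∀ i, QW (c i) = 0)
    (hcB : ∀ i, ∃ j, polarF QW (c i) (c j) = 1) :
    IsAdmissible (fun p : V × W => QV p.1 + QW p.2) := by
  obtain ⟨ℓ, b, hb, hbB⟩ := hV
  refine isAdmissible_of_basis ((b.prod c).map (shear c e)) (fun k => ?_) (fun k => ?_)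
  · rcases k with k | i <;> simp [shear_apply, hb, hc, he, hQW]
  · rcases k with k | i
    · obtain ⟨j, hj⟩ := hbB k
      refine ⟨.inl j, ?_⟩
      simp [shear_apply, polarF_prod, hj, polarF_self, hQW]
    · obtain ⟨j, hj⟩ := hcB i
      refine ⟨.inr j, ?_⟩
      simp [shear_apply, polarF_prod, hj, polarF_self, hQV]

end Admissible

theorem isAdmissible_Hminus : IsAdmissible Hminus := by
  refine ⟨2, Basis.finTwoProd (ZMod 2), fun i => ?_, fun i => ⟨i.rev, ?_⟩⟩ <;>
    fin_cases i <;> simp [Hminus, polarF]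

theorem Hplus_finTwoProd (k : Fin 2) : Hplus (Basis.finTwoProd (ZMod 2) k) = 0 := by
  fin_cases k <;> simp [Hplus]

theorem polarF_Hplus_finTwoProd (k : Fin 2) :
    polarF Hplus (Basis.finTwoProd (ZMod 2) k) (Basis.finTwoProd (ZMod 2) k.rev) = 1 := by
  fin_cases k <;> simp [Hplus, polarF]

theorem statement_3_general (m : ℕ) :
    IsAdmissible
      (fun p : (ZMod 2 × ZMod 2) × (Fin (m - 1) → ZMod 2 × ZMod 2) =>
        Hminus p.1 + ∑ i, Hplus (p.2 i)) := by
  have hHplus : Hplus 0 = 0 := mul_zero 0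
  refine isAdmissible_Hminus.prod
    (QW := fun w : Fin (m - 1) → ZMod 2 × ZMod 2 => ∑ i, Hplus (w i)) ?_ ?_ (e := (1, 0)) ?_
    (Pi.basis fun _ => Basis.finTwoProd (ZMod 2))
    (fun jk => ?_) (fun jk => ⟨⟨jk.1, jk.2.rev⟩, ?_⟩)
  · simp [Hminus]
  · simp [hHplus]
  · simp [Hminus]
  · simp [sum_apply_single hHplus, Hplus_finTwoProd]
  · simp [polarF_sum_single hHplus, polarF_Hplus_finTwoProd]

/-- For every m ≥ 1, the quadratic form H₋ ⊕ H₊^{⊕(m−1)} on 𝔽₂^{2m} is admissible. -/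
theorem statement_3 (m : ℕ) (hm : 1 ≤ m) :
    IsAdmissible
      (fun p : (ZMod 2 × ZMod 2) × (Fin (m - 1) → ZMod 2 × ZMod 2) =>
        Hminus p.1 + ∑ i, Hplus (p.2 i)) :=
  statement_3_general m
end

section
/- For every m ≥ 2, the quadratic form H₊^{⊕m} on 𝔽₂^{2m}, given by Q(z₁,…,z_{2m}) = z₁z₂ + z₃z₄ + ⋯ + z_{2m−1}z_{2m}, is admissible. -/
/-! For `m ≥ 2`, pair up the vectors `e_i(1,1)` and `e_i(1,0) + e_{i+1}(1,1)` (indices mod `m`).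
Both have `Q = 1`: the second one only because its `(1,1)`-part sits in a different block than
its `(1,0)`-part, which is where `m ≥ 2` enters. Their sum `e_i(0,1) + e_{i+1}(1,1)` also has
`Q = 1`, so their polar pairing is `1 - 1 - 1 = 1`. The `2m` vectors span, hence form a basis. -/

theorem polarF_comm {V : Type*} [AddCommMagma V] (Q : V → ZMod 2) (u v : V) :
    polarF Q u v = polarF Q v u := by
  rw [polarF, polarF, add_comm u, sub_right_comm]

theorem isAdmissible_of_top_le_span {V ι : Type*} [AddCommGroup V] [Module (ZMod 2) V]
    [Fintype ι] (Q : V → ZMod 2) (v : ι → V)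
    (hspan : ⊤ ≤ Submodule.span (ZMod 2) (Set.range v))
    (hcard : Fintype.card ι = Module.finrank (ZMod 2) V)
    (hQ : ∀ i, Q (v i) = 1) (hpolar : ∀ i, ∃ j, polarF Q (v i) (v j) = 1) :
    IsAdmissible Q := by
  set b := (basisOfTopLeSpanOfCardEqFinrank v hspan hcard).reindex (Fintype.equivFin ι)
  have hb : ∀ i, b i = v ((Fintype.equivFin ι).symm i) := by
    simp [b, coe_basisOfTopLeSpanOfCardEqFinrank]
  refine ⟨_, b, fun i => hb i ▸ hQ _, fun i => ?_⟩
  obtain ⟨j, hj⟩ := hpolar ((Fintype.equivFin ι).symm i)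
  exact ⟨Fintype.equivFin ι j, by simpa [hb] using hj⟩

theorem sum_comp_pi_single {ι M N : Type*} [Fintype ι] [DecidableEq ι] [AddCommMonoid M]
    [AddCommMonoid N] (q : M → N) (hq : q 0 = 0) (k : ι) (p : M) :
    ∑ i, q ((Pi.single k p : ι → M) i) = q p :=
  (Fintype.sum_eq_single k fun i hi => by simp [hi, hq]).trans (by simp)

theorem sum_comp_pi_single_add_pi_single {ι M N : Type*} [Fintype ι] [DecidableEq ι]
    [AddCommMonoid M] [AddCommMonoid N] (q : M → N) (hq : q 0 = 0) {k l : ι} (hkl : k ≠ l)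
    (p r : M) : ∑ i, q ((Pi.single k p + Pi.single l r : ι → M) i) = q p + q r :=
  (Fintype.sum_eq_add k l hkl fun i hi => by simp [hi.1, hi.2, hq]).trans (by simp [hkl, hkl.symm])

/-- The form `H₊^{⊕m}` on `(𝔽₂²)^m`. -/
def hplusSum (m : ℕ) (v : Fin m → ZMod 2 × ZMod 2) : ZMod 2 := ∑ i, Hplus (v i)

section

variable {n : ℕ}

def hplusBasisVec : Fin (n + 2) × Fin 2 → Fin (n + 2) → ZMod 2 × ZMod 2
  | (i, 0) => Pi.single i (1, 1)
  | (i, 1) => Pi.single i (1, 0) + Pi.single (i + 1) (1, 1)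

theorem hplusSum_single (i : Fin (n + 2)) (p : ZMod 2 × ZMod 2) :
    hplusSum _ (Pi.single i p) = Hplus p :=
  sum_comp_pi_single Hplus rfl i p

theorem hplusSum_single_add_single_succ (i : Fin (n + 2)) (p r : ZMod 2 × ZMod 2) :
    hplusSum _ (Pi.single i p + Pi.single (i + 1) r) = Hplus p + Hplus r :=
  sum_comp_pi_single_add_pi_single Hplus rfl (by simp) p r

theorem hplusSum_hplusBasisVec (k : Fin (n + 2) × Fin 2) : hplusSum _ (hplusBasisVec k) = 1 := by
  obtain ⟨i, s⟩ := k
  fin_cases s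
  · exact hplusSum_single i _
  · exact hplusSum_single_add_single_succ i _ _

theorem polarF_hplusSum_hplusBasisVec (i : Fin (n + 2)) :
    polarF (hplusSum _) (hplusBasisVec (i, 0)) (hplusBasisVec (i, 1)) = 1 := by
  have hsum : hplusBasisVec (i, 0) + hplusBasisVec (i, 1) =
      Pi.single i ((0, 1) : ZMod 2 × ZMod 2) + Pi.single (i + 1) (1, 1) := by
    rw [hplusBasisVec, hplusBasisVec, ← add_assoc, ← Pi.single_add]
    rfl
  rw [polarF, hsum, hplusSum_single_add_single_succ, hplusSum_hplusBasisVec,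
    hplusSum_hplusBasisVec]
  decide

theorem single_mem_span_hplusBasisVec (i : Fin (n + 2)) (p : ZMod 2 × ZMod 2) :
    Pi.single i p ∈ Submodule.span (ZMod 2) (Set.range hplusBasisVec) := by
  set S := Submodule.span (ZMod 2) (Set.range (hplusBasisVec (n := n)))
  have h11 : Pi.single i ((1, 1) : ZMod 2 × ZMod 2) ∈ S := Submodule.subset_span ⟨(i, 0), rfl⟩
  have h10 : Pi.single i ((1, 0) : ZMod 2 × ZMod 2) ∈ S := by
    have : Pi.single i ((1, 0) : ZMod 2 × ZMod 2) =
        hplusBasisVec (i, 1) - hplusBasisVec (i + 1, 0) := by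
      simp [hplusBasisVec]
    exact this ▸ sub_mem (Submodule.subset_span ⟨_, rfl⟩) (Submodule.subset_span ⟨_, rfl⟩)
  have hp : Pi.single i p = (p.1 - p.2) • (Pi.single i (1, 0) : Fin (n + 2) → ZMod 2 × ZMod 2) +
      p.2 • (Pi.single i (1, 1) : Fin (n + 2) → ZMod 2 × ZMod 2) := by
    rw [← Pi.single_smul, ← Pi.single_smul, ← Pi.single_add]
    congr 1
    ext <;> simp
  exact hp ▸ add_mem (S.smul_mem _ h10) (S.smul_mem _ h11)

theorem top_le_span_hplusBasisVec :
    ⊤ ≤ Submodule.span (ZMod 2) (Set.range (hplusBasisVec (n := n))) :=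
  fun x _ => Finset.univ_sum_single x ▸
    Submodule.sum_mem _ fun i _ => single_mem_span_hplusBasisVec i _

theorem isAdmissible_hplusSum : IsAdmissible (hplusSum (n + 2)) := by
  refine isAdmissible_of_top_le_span _ hplusBasisVec top_le_span_hplusBasisVec ?_
    hplusSum_hplusBasisVec fun ⟨i, s⟩ => ?_
  · simp [Module.finrank_pi_fintype, Module.finrank_prod, mul_comm]
  · fin_cases s
    · exact ⟨(i, 1), polarF_hplusSum_hplusBasisVec i⟩
    · exact ⟨(i, 0), (polarF_comm _ _ _).trans (polarF_hplusSum_hplusBasisVec i)⟩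

end

/-- For every m ≥ 2, the quadratic form H₊^{⊕m} on 𝔽₂^{2m} is admissible. -/
theorem statement_5 (m : ℕ) (hm : 2 ≤ m) :
    IsAdmissible (fun v : Fin m → ZMod 2 × ZMod 2 => ∑ i, Hplus (v i)) := by
  obtain ⟨n, rfl⟩ := Nat.exists_eq_add_of_le' hm
  exact isAdmissible_hplusSum
end
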